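/- (T-Drazin inverse via limit) Let A ∈ C^{n×n×p} be a complex tensor with T-index k = Ind(bcirc(A)). For every integer l ≥ k, the T-Drazin inverse is given by A^D = lim_{z→0} (A^{l+1} + zI)^{-1} * A^l, where I is the identity tensor, the inverse and products are T-products, and the limit is over z ∈ C with A^{l+1} + zI invertible. In particular A^D = lim_{z→0} (A^{n+1} + zI)^{-1} * A^n. -/

import Mathlib

open Matrix Kronecker Complex Polynomial

noncomputable section

/-- Block circulant matrix of a third-order tensor given by its frontal slices. -/
def bcirc {m n p : ℕ} (A : Fin p → Matrix (Fin m) (Fin n) ℂ) :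
    Matrix (Fin p × Fin m) (Fin p × Fin n) ℂ :=
  Matrix.of fun jr kc => A (jr.1 - kc.1) jr.2 kc.2

/-- The tensor T-product. -/
def tmul {m n s p : ℕ} (A : Fin p → Matrix (Fin m) (Fin n) ℂ)
    (B : Fin p → Matrix (Fin n) (Fin s) ℂ) : Fin p → Matrix (Fin m) (Fin s) ℂ :=
  fun i => ∑ j : Fin p, A (i - j) * B j

/-- The identity tensor. -/
def tId {n p : ℕ} [NeZero p] : Fin p → Matrix (Fin n) (Fin n) ℂ :=
  fun i => if i = 0 then 1 else 0

/-- T-product powers of a tensor. -/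
def tpow {n p : ℕ} [NeZero p] (A : Fin p → Matrix (Fin n) (Fin n) ℂ) : ℕ → Fin p → Matrix (Fin n) (Fin n) ℂ
  | 0 => tId
  | k + 1 => tmul (tpow A k) A

/-- Conjugate transpose of a tensor. -/
def tconjT {m n p : ℕ} [NeZero p] (A : Fin p → Matrix (Fin m) (Fin n) ℂ) :
    Fin p → Matrix (Fin n) (Fin m) ℂ :=
  fun i => (A (-i))ᴴ

/-- Invertibility with respect to the T-product. -/
def TInvertible {n p : ℕ} [NeZero p] (A : Fin p → Matrix (Fin n) (Fin n) ℂ) : Prop :=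
  ∃ B, tmul A B = tId ∧ tmul B A = tId

/-- `fold` of an `np × n` matrix back into a tensor (first block column). -/
def tfold {n p : ℕ} [NeZero p] (M : Matrix (Fin p × Fin n) (Fin p × Fin n) ℂ) :
    Fin p → Matrix (Fin n) (Fin n) ℂ :=
  fun i => Matrix.of fun r c => M (i, r) ((0 : Fin p), c)

/-- The primitive root ω = e^{-2πi/p}. -/
def tomega (p : ℕ) : ℂ := Complex.exp (-2 * Real.pi * Complex.I / p)

/-- The (unitary) discrete Fourier matrix. -/
def fourierMat (p : ℕ) : Matrix (Fin p) (Fin p) ℂ :=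
  Matrix.of fun j k => tomega p ^ ((j : ℕ) * (k : ℕ)) / Real.sqrt p

/-- Block diagonal matrix with `p` diagonal blocks of size `n × n`. -/
def bdiag {n p : ℕ} (B : Fin p → Matrix (Fin n) (Fin n) ℂ) :
    Matrix (Fin p × Fin n) (Fin p × Fin n) ℂ :=
  Matrix.of fun jr kc => if jr.1 = kc.1 then B jr.1 jr.2 kc.2 else 0


/-- The tensor inverse via `bcirc`: `fold ((bcirc A)⁻¹ · Ê₁)`. -/
def tinv {n p : ℕ} [NeZero p] (A : Fin p → Matrix (Fin n) (Fin n) ℂ) :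
    Fin p → Matrix (Fin n) (Fin n) ℂ :=
  tfold (bcirc A)⁻¹

/-! Applying `bcirc` turns T-products into matrix products and `tinv` into the matrix inverse:
block circulant matrices are exactly the matrices invariant under the simultaneous cyclic shift of
both block indices, and this invariance passes to the inverse. So the statement is one about the
Drazin inverse `D` of `N = bcirc A`. Since `N ^ (l + 1) * D ^ (l + 2) = D`, we have
`(N ^ (l + 1) + z) * D ^ (l + 2) = D * (1 + z * D ^ (l + 1))`; together with
`N ^ l = (N ^ (l + 1) + z) * D - z * D` this gives
`(N ^ (l + 1) + z)⁻¹ * N ^ l = D - z * D ^ (l + 2) * (1 + z * D ^ (l + 1))⁻¹`, and the right-hand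
side is continuous at `z = 0`.

For `l = n` it remains to see that `Ind (bcirc A) ≤ n`. The shift `S` of coordinates commutes with
`bcirc A` and `S ^ p = 1`, so averaging with `p`-th roots of unity splits every vector into
eigenvectors of `S`. Each eigenspace of `S` is `bcirc A`-invariant and has dimension at most `n`
(an eigenvector is determined by its first block), and on a space of dimension at most `n` the
kernels of the powers of an operator are stable from the `n`-th power on. -/

open Filter Topology Module Fin.NatCast

section Drazin

variable {R : Type*} [Monoid R] {N D : R}

theorem pow_succ_mul_eq_pow_of_pow_mul_mul_eq {k l : ℕ} (hND : Commute N D)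
    (hk : N ^ k * D * N = N ^ k) (hkl : k ≤ l) : N ^ (l + 1) * D = N ^ l := by
  obtain ⟨m, rfl⟩ := Nat.exists_eq_add_of_le' hkl
  calc N ^ (m + k + 1) * D = N ^ m * (N ^ k * D * N) := by
        rw [pow_succ, pow_add]; simp only [mul_assoc]; rw [hND.eq]
    _ = N ^ (m + k) := by rw [hk, pow_add]

theorem pow_mul_pow_succ_eq_of_mul_mul_eq (hND : Commute N D) (hDND : D * N * D = D) (j : ℕ) :
    N ^ j * D ^ (j + 1) = D := by
  induction j with
  | zero => simp
  | succ j ih =>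
    calc N ^ (j + 1) * D ^ (j + 1 + 1) = N ^ j * (N * D * D) * D ^ j := by
          rw [pow_succ N j, pow_succ' D (j + 1), pow_succ' D j]; simp only [mul_assoc]
      _ = N ^ j * D ^ (j + 1) := by rw [hND.eq, hDND, mul_assoc, ← pow_succ']
      _ = D := ih

end Drazin

namespace Matrix

variable {ι 𝕜 : Type*} [Fintype ι]

theorem rank_eq_rank_of_ker_mulVecLin_eq [Field 𝕜] {M M' : Matrix ι ι 𝕜}
    (h : LinearMap.ker M.mulVecLin = LinearMap.ker M'.mulVecLin) : M.rank = M'.rank := by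
  have hM := LinearMap.finrank_range_add_finrank_ker M.mulVecLin
  have hM' := LinearMap.finrank_range_add_finrank_ker M'.mulVecLin
  rw [h] at hM
  unfold rank
  omega

theorem commute_mulVecLin_funLeft [CommSemiring 𝕜] {M : Matrix ι ι 𝕜} {e : ι ≃ ι}
    (h : M.submatrix e e = M) : Commute M.mulVecLin (LinearMap.funLeft 𝕜 𝕜 e) := by
  refine LinearMap.ext fun v => ?_
  change M *ᵥ (v ∘ e) = (M *ᵥ v) ∘ e
  conv_lhs => rw [← h]
  rw [submatrix_mulVec_equiv, Function.comp_assoc, e.self_comp_symm, Function.comp_id]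

theorem inv_add_smul_one_mul_pow_eq [DecidableEq ι] [Field 𝕜] {N D : Matrix ι ι 𝕜} {l : ℕ}
    {z : 𝕜} (hND : Commute N D) (hDND : D * N * D = D) (hl : N ^ (l + 1) * D = N ^ l)
    (hM : IsUnit (N ^ (l + 1) + z • 1)) (hE : IsUnit (1 + z • D ^ (l + 1))) :
    (N ^ (l + 1) + z • 1)⁻¹ * N ^ l = D - z • (D ^ (l + 2) * (1 + z • D ^ (l + 1))⁻¹) := by
  set M := N ^ (l + 1) + z • 1
  set E := 1 + z • D ^ (l + 1)
  have hMdet := (isUnit_iff_isUnit_det M).1 hM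
  have hMD : M * D = N ^ l + z • D := by
    rw [add_mul, hl, smul_mul, one_mul]
  have hMD' : M * D ^ (l + 2) = D * E := by
    rw [add_mul, pow_mul_pow_succ_eq_of_mul_mul_eq hND hDND, smul_mul, one_mul, mul_add, mul_one,
      Matrix.mul_smul, ← pow_succ']
  have hMinvD : M⁻¹ * D = D ^ (l + 2) * E⁻¹ := by
    rw [← nonsing_inv_mul_cancel_left _ (D ^ (l + 2)) hMdet, hMD', mul_assoc, mul_assoc,
      mul_nonsing_inv _ ((isUnit_iff_isUnit_det E).1 hE), mul_one]
  rw [← hMinvD, show N ^ l = M * D - z • D by rw [hMD]; abel, Matrix.mul_sub,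
    nonsing_inv_mul_cancel_left _ _ hMdet, Matrix.mul_smul]

theorem tendsto_inv_add_smul_one_mul_pow [DecidableEq ι] [NormedField 𝕜] {N D : Matrix ι ι 𝕜}
    {l : ℕ} (hND : Commute N D) (hDND : D * N * D = D) (hl : N ^ (l + 1) * D = N ^ l) :
    Tendsto (fun z : 𝕜 => (N ^ (l + 1) + z • 1)⁻¹ * N ^ l)
      (𝓝[{z | IsUnit (N ^ (l + 1) + z • 1)}] 0) (𝓝 D) := by
  set E : 𝕜 → Matrix ι ι 𝕜 := fun z => 1 + z • D ^ (l + 1)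
  have hE : Continuous E := by fun_prop
  have hE0 : (E 0).det ≠ 0 := by simp [E]
  have hEinv : ContinuousAt (fun z => (E z)⁻¹) 0 :=
    (continuousAt_matrix_inv _ (by rw [Ring.inverse_eq_inv']; exact continuousAt_inv₀ hE0)).comp
      hE.continuousAt
  have hEunit : ∀ᶠ z in 𝓝 0, IsUnit (E z) :=
    (hE.matrix_det.continuousAt.eventually_ne hE0).mono fun z hz =>
      (isUnit_iff_isUnit_det _).2 hz.isUnit
  have hlim : Tendsto (fun z => D - z • (D ^ (l + 2) * (E z)⁻¹)) (𝓝 0) (𝓝 D) := by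
    have : ContinuousAt (fun z => D - z • (D ^ (l + 2) * (E z)⁻¹)) 0 := by fun_prop
    simpa using this.tendsto
  refine (hlim.mono_left nhdsWithin_le_nhds).congr' ?_
  filter_upwards [self_mem_nhdsWithin, nhdsWithin_le_nhds hEunit] with z hM hE
  exact (inv_add_smul_one_mul_pow_eq hND hDND hl hM hE).symm

end Matrix

namespace Module.End

variable {K V : Type*} [Field K] [AddCommGroup V] [Module K V]

theorem pow_apply_eq_zero_of_pow_succ_apply_eq_zero {C : End K V} {W : Submodule K V}
    [FiniteDimensional K W] {n : ℕ} (hW : finrank K W ≤ n) (hC : ∀ x ∈ W, C x ∈ W) {u : V}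
    (hu : u ∈ W) (h : (C ^ (n + 1)) u = 0) : (C ^ n) u = 0 := by
  have hrestrict (m : ℕ) : (C.restrict hC ^ m) ⟨u, hu⟩ = 0 ↔ (C ^ m) u = 0 := by
    rw [pow_restrict, Subtype.ext_iff, LinearMap.coe_restrict_apply, Submodule.coe_zero]
  have hker : ⟨u, hu⟩ ∈ LinearMap.ker (C.restrict hC ^ (n + 1)) := (hrestrict _).2 h
  rw [ker_pow_eq_ker_pow_finrank_of_le (by omega),
    ← ker_pow_eq_ker_pow_finrank_of_le hW] at hker
  exact (hrestrict n).1 hker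

/-- Up to the factor `p`, the projection onto the `μ⁻¹`-eigenspace of an operator of order
dividing `p`. -/
def twistedSum (S : End K V) (p : ℕ) (μ : K) : End K V :=
  ∑ j ∈ Finset.range p, μ ^ j • S ^ j

variable {S : End K V} {p : ℕ}

theorem smul_mul_twistedSum {μ : K} (hS : S ^ p = 1) (hμ : μ ^ p = 1) :
    μ • S * twistedSum S p μ = twistedSum S p μ := by
  have h := Finset.sum_range_succ' (fun j => μ ^ j • S ^ j) p
  rw [Finset.sum_range_succ, hS, hμ, pow_zero, pow_zero, add_left_inj] at h
  rw [twistedSum, Finset.mul_sum, h]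
  refine Finset.sum_congr rfl fun j _ => ?_
  rw [smul_mul_smul_comm, ← pow_succ', ← pow_succ']

theorem twistedSum_apply_mem_eigenspace [NeZero p] {μ : K} (hS : S ^ p = 1) (hμ : μ ^ p = 1)
    (v : V) : twistedSum S p μ v ∈ eigenspace S μ⁻¹ := by
  have hμ0 : μ ≠ 0 := by rintro rfl; simp [zero_pow (NeZero.ne p)] at hμ
  have h : μ • S (twistedSum S p μ v) = twistedSum S p μ v :=
    LinearMap.congr_fun (smul_mul_twistedSum hS hμ) v
  rw [mem_eigenspace_iff, ← h, smul_smul, inv_mul_cancel₀ hμ0, one_smul, h]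

theorem sum_twistedSum_pow {ω : K} (hω : IsPrimitiveRoot ω p) :
    ∑ t ∈ Finset.range p, twistedSum S p (ω ^ t) = (p : K) • 1 := by
  have hgeom (j : ℕ) (hj : j ∈ Finset.range p) (hj0 : j ≠ 0) :
      ∑ t ∈ Finset.range p, (ω ^ t) ^ j = 0 := by
    have hne : ω ^ j ≠ 1 := hω.pow_ne_one_of_pos_of_lt hj0 (Finset.mem_range.1 hj)
    have h := geom_sum_mul (ω ^ j) p
    rw [← pow_mul, mul_comm j p, pow_mul, hω.pow_eq_one, one_pow, sub_self] at h
    simp_rw [← pow_mul, mul_comm _ j, pow_mul]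
    exact (mul_eq_zero.1 h).resolve_right (sub_ne_zero.2 hne)
  simp only [twistedSum]
  rw [Finset.sum_comm]
  simp_rw [← Finset.sum_smul]
  rw [Finset.sum_eq_single 0 (fun j hj hj0 => by rw [hgeom j hj hj0, zero_smul])
    (fun h => by simp_all)]
  simp

theorem commute_twistedSum {C : End K V} (hCS : Commute C S) (μ : K) :
    Commute C (twistedSum S p μ) :=
  Commute.sum_right _ _ _ fun j _ => (hCS.pow_right j).smul_right _

theorem ker_pow_succ_le_ker_pow_of_commute [FiniteDimensional K V] [NeZero p] {C : End K V}
    {ω : K} {n : ℕ} (hCS : Commute C S) (hS : S ^ p = 1) (hω : IsPrimitiveRoot ω p)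
    (hdim : ∀ ν, finrank K (eigenspace S ν) ≤ n) :
    LinearMap.ker (C ^ (n + 1)) ≤ LinearMap.ker (C ^ n) := by
  intro v hv
  rw [LinearMap.mem_ker] at hv ⊢
  have hμ (t : ℕ) : (ω ^ t) ^ p = 1 := by
    rw [← pow_mul, mul_comm, pow_mul, hω.pow_eq_one, one_pow]
  have hcomp (t : ℕ) : (C ^ n) (twistedSum S p (ω ^ t) v) = 0 := by
    refine pow_apply_eq_zero_of_pow_succ_apply_eq_zero (hdim _)
      (fun x hx => mapsTo_genEigenspace_of_comm hCS.symm _ 1 hx)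
      (twistedSum_apply_mem_eigenspace hS (hμ t) v) ?_
    rw [← mul_apply, ((commute_twistedSum hCS _).pow_left _).eq, mul_apply, hv, map_zero]
  have hp : (p : K) ≠ 0 := hω.neZero'.out
  have := congrArg (C ^ n) (congrArg (· v) (sum_twistedSum_pow (S := S) hω))
  simp only [LinearMap.sum_apply, map_sum, hcomp, Finset.sum_const_zero,
    LinearMap.smul_apply, one_apply, map_smul] at this
  exact (smul_eq_zero.1 this.symm).resolve_left hp

end Module.End

def blockShift (p : ℕ) [NeZero p] (α : Type*) : Fin p × α ≃ Fin p × α :=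
  (Equiv.addRight 1).prodCongr (Equiv.refl α)

section CyclicShift

variable {p : ℕ} [NeZero p] {K α : Type*} [Field K]

theorem funLeft_blockShift_pow_apply (j : ℕ) (v : Fin p × α → K) (a : Fin p) (r : α) :
    (LinearMap.funLeft K K (blockShift p α) ^ j) v (a, r) = v (a + j, r) := by
  induction j generalizing a v with
  | zero => simp
  | succ j ih => rw [pow_succ, Module.End.mul_apply, ih]; simp [blockShift, add_assoc]

theorem funLeft_blockShift_pow_card : LinearMap.funLeft K K (blockShift p α) ^ p = 1 :=
  LinearMap.ext fun v => funext fun ⟨a, r⟩ => by simp [funLeft_blockShift_pow_apply]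

theorem finrank_eigenspace_funLeft_blockShift_le [Fintype α] (ν : K) :
    finrank K (Module.End.eigenspace (LinearMap.funLeft K K (blockShift p α)) ν) ≤
      Fintype.card α := by
  set W := Module.End.eigenspace (LinearMap.funLeft K K (blockShift p α)) ν
  have hpow {u : Fin p × α → K} (hu : u ∈ W) (r : α) (j : ℕ) : u (j, r) = ν ^ j * u (0, r) := by
    replace hu := congrFun (Module.End.mem_eigenspace_iff.1 hu)
    induction j with
    | zero => simp
    | succ j ih => simpa [blockShift, ih, pow_succ', mul_assoc] using hu (j, r)
  have hinj : Function.Injective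
      ((LinearMap.funLeft K K fun r : α => ((0 : Fin p), r)).comp W.subtype) := by
    rw [← LinearMap.ker_eq_bot, LinearMap.ker_eq_bot']
    intro u hu
    ext ⟨a, r⟩
    have h0 : (u : Fin p × α → K) (0, r) = 0 := congrFun hu r
    rw [← Fin.cast_val_eq_self a, hpow u.2 r a, h0, mul_zero]
    rfl
  simpa using LinearMap.finrank_le_finrank_of_injective hinj

end CyclicShift

section Tensor

variable {m n p : ℕ} [NeZero p]

omit [NeZero p] in
theorem bcirc_add (A B : Fin p → Matrix (Fin m) (Fin n) ℂ) :
    bcirc (A + B) = bcirc A + bcirc B := rfl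

omit [NeZero p] in
theorem bcirc_smul (z : ℂ) (A : Fin p → Matrix (Fin m) (Fin n) ℂ) :
    bcirc (z • A) = z • bcirc A := rfl

theorem bcirc_tId : bcirc (tId : Fin p → Matrix (Fin n) (Fin n) ℂ) = 1 := by
  ext ⟨a, r⟩ ⟨b, c⟩
  by_cases h : a = b <;> simp [bcirc, tId, Matrix.one_apply, sub_eq_zero, h]

theorem bcirc_tmul {s : ℕ} (A : Fin p → Matrix (Fin m) (Fin n) ℂ)
    (B : Fin p → Matrix (Fin n) (Fin s) ℂ) : bcirc (tmul A B) = bcirc A * bcirc B := by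
  ext ⟨a, r⟩ ⟨b, c⟩
  simp only [bcirc, tmul, Matrix.of_apply, Matrix.mul_apply, Matrix.sum_apply,
    Fintype.sum_prod_type]
  refine Fintype.sum_equiv (Equiv.addRight b) _ _ fun j => Finset.sum_congr rfl fun s _ => ?_
  simp [sub_add_eq_sub_sub, sub_right_comm]

theorem bcirc_tpow (A : Fin p → Matrix (Fin n) (Fin n) ℂ) (l : ℕ) :
    bcirc (tpow A l) = bcirc A ^ l := by
  induction l with
  | zero => exact bcirc_tId
  | succ l ih => rw [tpow, bcirc_tmul, ih, pow_succ]

theorem tfold_bcirc (A : Fin p → Matrix (Fin n) (Fin n) ℂ) : tfold (bcirc A) = A := by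
  funext i; ext r c; simp [tfold, bcirc]

theorem continuous_tfold :
    Continuous (tfold : Matrix (Fin p × Fin n) (Fin p × Fin n) ℂ → _) := by
  unfold tfold; fun_prop

theorem bcirc_submatrix_blockShift (A : Fin p → Matrix (Fin m) (Fin n) ℂ) :
    (bcirc A).submatrix (blockShift p _) (blockShift p _) = bcirc A := by
  ext ⟨a, r⟩ ⟨b, c⟩
  simp [bcirc, blockShift]

theorem bcirc_tfold_of_submatrix_blockShift {M : Matrix (Fin p × Fin n) (Fin p × Fin n) ℂ}
    (h : M.submatrix (blockShift p _) (blockShift p _) = M) : bcirc (tfold M) = M := by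
  have hshift (j : ℕ) (a b : Fin p) (r c : Fin n) :
      M (a + j, r) (b + j, c) = M (a, r) (b, c) := by
    induction j with
    | zero => simp
    | succ j ih =>
      have := congrFun (congrFun h (a + j, r)) (b + j, c)
      simpa [blockShift, add_assoc, ih] using this
  ext ⟨a, r⟩ ⟨b, c⟩
  simpa [bcirc, tfold, Fin.cast_val_eq_self] using (hshift b (a - b) 0 r c).symm

theorem bcirc_tinv (A : Fin p → Matrix (Fin n) (Fin n) ℂ) : bcirc (tinv A) = (bcirc A)⁻¹ := by
  refine bcirc_tfold_of_submatrix_blockShift ?_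
  rw [← Matrix.inv_submatrix_equiv, bcirc_submatrix_blockShift]

theorem rank_bcirc_pow_eq_rank_bcirc_pow_succ (A : Fin p → Matrix (Fin n) (Fin n) ℂ) :
    (bcirc A ^ n).rank = (bcirc A ^ (n + 1)).rank := by
  refine Matrix.rank_eq_rank_of_ker_mulVecLin_eq ?_
  rw [← Matrix.toLin'_apply', ← Matrix.toLin'_apply', Matrix.toLin'_pow, Matrix.toLin'_pow,
    Matrix.toLin'_apply']
  refine le_antisymm (fun v hv => ?_) ?_
  · rw [LinearMap.mem_ker, pow_succ', Module.End.mul_apply, LinearMap.mem_ker.1 hv, map_zero]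
  · exact Module.End.ker_pow_succ_le_ker_pow_of_commute
      (Matrix.commute_mulVecLin_funLeft (bcirc_submatrix_blockShift A))
      funLeft_blockShift_pow_card (Complex.isPrimitiveRoot_exp p (NeZero.ne p))
      fun ν => (finrank_eigenspace_funLeft_blockShift_le ν).trans_eq (Fintype.card_fin n)

theorem tendsto_tmul_tinv_add_smul_tId {A X : Fin p → Matrix (Fin n) (Fin n) ℂ} {k l : ℕ}
    (h1 : tmul (tmul (tpow A k) X) A = tpow A k) (h2 : tmul (tmul X A) X = X)
    (h3 : tmul A X = tmul X A) (hkl : k ≤ l) :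
    Tendsto (fun z : ℂ => tmul (tinv (tpow A (l + 1) + z • tId)) (tpow A l))
      (𝓝[{z | IsUnit (bcirc (tpow A (l + 1) + z • tId))}] 0) (𝓝 X) := by
  have hcomm : Commute (bcirc A) (bcirc X) := by
    simpa only [Commute, SemiconjBy, bcirc_tmul] using congrArg bcirc h3
  have hXAX : bcirc X * bcirc A * bcirc X = bcirc X := by
    simpa only [bcirc_tmul] using congrArg bcirc h2
  have hk : bcirc A ^ k * bcirc X * bcirc A = bcirc A ^ k := by
    simpa only [bcirc_tmul, bcirc_tpow] using congrArg bcirc h1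
  have hbcirc (z : ℂ) : bcirc (tpow A (l + 1) + z • tId) = bcirc A ^ (l + 1) + z • 1 := by
    rw [bcirc_add, bcirc_smul, bcirc_tId, bcirc_tpow]
  have hfun (z : ℂ) : tmul (tinv (tpow A (l + 1) + z • tId)) (tpow A l) =
      tfold ((bcirc A ^ (l + 1) + z • 1)⁻¹ * bcirc A ^ l) := by
    rw [← tfold_bcirc (tmul _ _), bcirc_tmul, bcirc_tinv, bcirc_tpow, hbcirc]
  simp only [hfun, hbcirc]
  rw [← tfold_bcirc X]
  exact (continuous_tfold.tendsto _).comp (Matrix.tendsto_inv_add_smul_one_mul_pow hcomm hXAX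
    (pow_succ_mul_eq_pow_of_pow_mul_mul_eq hcomm hk hkl))

end Tensor

theorem t_drazin_limit_general {n p : ℕ} [NeZero p]
    (A X : Fin p → Matrix (Fin n) (Fin n) ℂ) (k : ℕ)
    (hkmin : ∀ j : ℕ, ((bcirc A) ^ j).rank = ((bcirc A) ^ (j + 1)).rank → k ≤ j)
    (h1 : tmul (tmul (tpow A k) X) A = tpow A k)
    (h2 : tmul (tmul X A) X = X)
    (h3 : tmul A X = tmul X A) :
    (∀ l : ℕ, k ≤ l →
      Filter.Tendsto
        (fun z : ℂ => tmul (tinv (tpow A (l + 1) + z • tId)) (tpow A l))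
        (nhdsWithin 0 {z : ℂ | IsUnit (bcirc (tpow A (l + 1) + z • tId))})
        (nhds X)) ∧
      Filter.Tendsto
        (fun z : ℂ => tmul (tinv (tpow A (n + 1) + z • tId)) (tpow A n))
        (nhdsWithin 0 {z : ℂ | IsUnit (bcirc (tpow A (n + 1) + z • tId))})
        (nhds X) :=
  ⟨fun _ hkl => tendsto_tmul_tinv_add_smul_tId h1 h2 h3 hkl,
    tendsto_tmul_tinv_add_smul_tId h1 h2 h3 (hkmin n (rank_bcirc_pow_eq_rank_bcirc_pow_succ A))⟩

/-- the T-Drazin inverse (the tensor `X` satisfying the Drazin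
equations at the T-index `k` of `A`) is given by the limit
`X = lim_{z→0} (A^{l+1} + zI)⁻¹ * A^l` for every `l ≥ k`; in particular for `l = n`. -/
theorem t_drazin_limit {n p : ℕ} [NeZero p]
    (A X : Fin p → Matrix (Fin n) (Fin n) ℂ) (k : ℕ)
    (hk : ((bcirc A) ^ k).rank = ((bcirc A) ^ (k + 1)).rank)
    (hkmin : ∀ j : ℕ, ((bcirc A) ^ j).rank = ((bcirc A) ^ (j + 1)).rank → k ≤ j)
    (h1 : tmul (tmul (tpow A k) X) A = tpow A k)
    (h2 : tmul (tmul X A) X = X)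
    (h3 : tmul A X = tmul X A) :
    (∀ l : ℕ, k ≤ l →
      Filter.Tendsto
        (fun z : ℂ => tmul (tinv (tpow A (l + 1) + z • tId)) (tpow A l))
        (nhdsWithin 0 {z : ℂ | IsUnit (bcirc (tpow A (l + 1) + z • tId))})
        (nhds X)) ∧
      Filter.Tendsto
        (fun z : ℂ => tmul (tinv (tpow A (n + 1) + z • tId)) (tpow A n))
        (nhdsWithin 0 {z : ℂ | IsUnit (bcirc (tpow A (n + 1) + z • tId))})
        (nhds X) :=
  t_drazin_limit_general A X k hkmin h1 h2 h3

end
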